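/- arXiv:2508.14839 — 2 statements merged into one kernel-verified Lean document; each statement's English description precedes it below -/
import Mathlib

section
/- Let n ≥ 1 and 0 < ε < 1. Every short natural directed path γ : [0,ε] → [0,1]^n extends to a natural directed path γ̃ : [0,n] → [0,1]^n with γ̃(n) = 1ₙ, by setting γ̃(t) = γ(ε) + ((t-ε)/(n-ε))·(1ₙ - γ(ε)) for t ∈ [ε,n]. Moreover the resulting map N_n(ε) → N_n is continuous and exhibits N_n(ε) as a retract of N_n, where the retraction N_n → N_n(ε) is restriction to [0,ε]. -/
open Set Filter Topology

/-- A natural directed path of `[0,1]^n` of length `ℓ`: a continuous map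
`γ : [0,ℓ] → [0,1]^n`, non-decreasing in each coordinate, with `γ 0 = 0`
and `∑ i, γ t i = t` for all `t`. -/
def IsNatural (n : ℕ) (ℓ : ℝ) (γ : C(Set.Icc (0:ℝ) ℓ, Fin n → ℝ)) : Prop :=
  (∀ i : Fin n, Monotone fun t => γ t i) ∧
  (∀ t i, γ t i ∈ Set.Icc (0:ℝ) 1) ∧
  (∀ h : (0:ℝ) ∈ Set.Icc (0:ℝ) ℓ, γ ⟨0, h⟩ = 0) ∧
  (∀ t : Set.Icc (0:ℝ) ℓ, ∑ i, γ t i = (t : ℝ))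

/-- The space `N_n(ε)` of short natural directed paths of `[0,1]^n` of
natural length `ε`, with the uniform convergence (compact-open) topology. -/
def NShort (n : ℕ) (ε : ℝ) : Type :=
  {γ : C(Set.Icc (0:ℝ) ε, Fin n → ℝ) // IsNatural n ε γ}

noncomputable instance (n : ℕ) (ε : ℝ) : MetricSpace (NShort n ε) :=
  inferInstanceAs (MetricSpace {γ : C(Set.Icc (0:ℝ) ε, Fin n → ℝ) // IsNatural n ε γ})

/-- The space `N_n` of natural directed paths of `[0,1]^n` from `0` to `1`. -/
def NFull (n : ℕ) : Type :=
  {γ : C(Set.Icc (0:ℝ) (n:ℝ), Fin n → ℝ) // IsNatural n n γ ∧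
    ∀ h : (n:ℝ) ∈ Set.Icc (0:ℝ) (n:ℝ), γ ⟨n, h⟩ = 1}

noncomputable instance (n : ℕ) : MetricSpace (NFull n) :=
  inferInstanceAs (MetricSpace {γ : C(Set.Icc (0:ℝ) (n:ℝ), Fin n → ℝ) // _})

section Aux

variable {n : ℕ} {ε : ℝ}

/-- Clamp map `[0,n] → [0,ε]`. -/
noncomputable def clampMap (hε : 0 ≤ ε) : C(Set.Icc (0:ℝ) (n:ℝ), Set.Icc (0:ℝ) ε) :=
  ⟨fun t => ⟨min (t : ℝ) ε, le_min t.2.1 hε, min_le_right _ _⟩, by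
    refine Continuous.subtype_mk ?_ _
    exact (continuous_subtype_val.min continuous_const)⟩

/-- The extension of a short path to `[0,n]`. -/
noncomputable def extMap (hε : 0 ≤ ε) (hεn : ε < (n:ℝ))
    (γ : C(Set.Icc (0:ℝ) ε, Fin n → ℝ)) : C(Set.Icc (0:ℝ) (n:ℝ), Fin n → ℝ) :=
  ⟨fun t => γ (clampMap hε t) +
      ((max (t : ℝ) ε - ε) / ((n:ℝ) - ε)) • ((1 : Fin n → ℝ) - γ ⟨ε, hε, le_refl ε⟩), by
    refine Continuous.add (γ.continuous.comp (clampMap hε).continuous) ?_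
    exact (Continuous.smul
      (((continuous_subtype_val.max continuous_const).sub continuous_const).div_const _)
      continuous_const)⟩

lemma extMap_apply (hε : 0 ≤ ε) (hεn : ε < (n:ℝ)) (γ : C(Set.Icc (0:ℝ) ε, Fin n → ℝ))
    (t : Set.Icc (0:ℝ) (n:ℝ)) :
    extMap hε hεn γ t = γ (clampMap hε t) +
      ((max (t : ℝ) ε - ε) / ((n:ℝ) - ε)) • ((1 : Fin n → ℝ) - γ ⟨ε, hε, le_refl ε⟩) := rfl

lemma extMap_of_le (hε : 0 ≤ ε) (hεn : ε < (n:ℝ)) (γ : C(Set.Icc (0:ℝ) ε, Fin n → ℝ))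
    (t : Set.Icc (0:ℝ) (n:ℝ)) (h : (t : ℝ) ≤ ε) :
    extMap hε hεn γ t = γ ⟨t, t.2.1, h⟩ := by
  rw [extMap_apply]
  have h1 : max (t : ℝ) ε = ε := max_eq_right h
  have h2 : (clampMap hε t : Set.Icc (0:ℝ) ε) = ⟨t, t.2.1, h⟩ := by
    simp [clampMap, min_eq_left h]
  rw [h1, h2]
  simp

lemma extMap_of_ge (hε : 0 ≤ ε) (hεn : ε < (n:ℝ)) (γ : C(Set.Icc (0:ℝ) ε, Fin n → ℝ))
    (t : Set.Icc (0:ℝ) (n:ℝ)) (h : ε ≤ (t : ℝ)) :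
    extMap hε hεn γ t = γ ⟨ε, hε, le_refl ε⟩ +
      (((t : ℝ) - ε) / ((n:ℝ) - ε)) • ((1 : Fin n → ℝ) - γ ⟨ε, hε, le_refl ε⟩) := by
  rw [extMap_apply]
  have h1 : max (t : ℝ) ε = (t : ℝ) := max_eq_left h
  have h2 : (clampMap hε t : Set.Icc (0:ℝ) ε) = ⟨ε, hε, le_refl ε⟩ := by
    simp [clampMap, min_eq_right h]
  rw [h1, h2]

lemma extMap_natural (hε : 0 ≤ ε) (hεn : ε < (n:ℝ)) (γ : C(Set.Icc (0:ℝ) ε, Fin n → ℝ))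
    (hγ : IsNatural n ε γ) :
    IsNatural n n (extMap hε hεn γ) ∧
      ∀ h : (n:ℝ) ∈ Set.Icc (0:ℝ) (n:ℝ), extMap hε hεn γ ⟨n, h⟩ = 1 := by
  obtain ⟨hmono, hbox, h0, hsum⟩ := hγ
  have hne : (n:ℝ) - ε ≠ 0 := by linarith
  have hpos : (0:ℝ) < (n:ℝ) - ε := by linarith
  have hc_nonneg : ∀ t : Set.Icc (0:ℝ) (n:ℝ), 0 ≤ (max (t : ℝ) ε - ε) / ((n:ℝ) - ε) := by
    intro t
    apply div_nonneg _ hpos.le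
    have := le_max_right (t : ℝ) ε
    linarith
  have hc_le_one : ∀ t : Set.Icc (0:ℝ) (n:ℝ), (max (t : ℝ) ε - ε) / ((n:ℝ) - ε) ≤ 1 := by
    intro t
    rw [div_le_one hpos]
    have h1 : (t : ℝ) ≤ n := t.2.2
    have h2 : max (t : ℝ) ε ≤ (n:ℝ) := max_le h1 hεn.le
    linarith
  have hεi : ∀ i, γ ⟨ε, hε, le_refl ε⟩ i ∈ Set.Icc (0:ℝ) 1 := fun i => hbox _ i
  have hγle : ∀ (s : Set.Icc (0:ℝ) ε) i, γ s i ≤ γ ⟨ε, hε, le_refl ε⟩ i := by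
    intro s i
    exact hmono i (Subtype.coe_le_coe.mp (by exact s.2.2))
  refine ⟨⟨?_, ?_, ?_, ?_⟩, ?_⟩
  · -- monotone
    intro i s t hst
    simp only [extMap_apply, Pi.add_apply, Pi.smul_apply, Pi.sub_apply, Pi.one_apply,
      smul_eq_mul]
    have hst' : (s : ℝ) ≤ (t : ℝ) := hst
    have h1 : γ (clampMap hε s) i ≤ γ (clampMap hε t) i := by
      apply hmono i
      show min (s:ℝ) ε ≤ min (t:ℝ) ε
      exact min_le_min hst' le_rfl
    have h2 : (max (s : ℝ) ε - ε) / ((n:ℝ) - ε) ≤ (max (t : ℝ) ε - ε) / ((n:ℝ) - ε) := by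
      exact (div_le_div_iff_of_pos_right hpos).mpr (sub_le_sub_right (max_le_max hst' le_rfl) ε)
    have h3 : 0 ≤ 1 - γ ⟨ε, hε, le_refl ε⟩ i := by
      have := (hεi i).2; linarith
    nlinarith [hc_nonneg s, hc_nonneg t]
  · -- box
    intro t i
    simp only [extMap_apply, Pi.add_apply, Pi.smul_apply, Pi.sub_apply, Pi.one_apply,
      smul_eq_mul]
    have hγc := hbox (clampMap hε t) i
    have hle := hγle (clampMap hε t) i
    have h3 : 0 ≤ 1 - γ ⟨ε, hε, le_refl ε⟩ i := by
      have := (hεi i).2; linarith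
    constructor
    · have := hc_nonneg t
      nlinarith [hγc.1]
    · nlinarith [hc_le_one t, hc_nonneg t, (hεi i).2]
  · -- value at 0
    intro h
    have h0' : ((0:ℝ)) ≤ ε := hε
    rw [extMap_of_le hε hεn γ ⟨0, h⟩ h0']
    exact h0 _
  · -- sum
    intro t
    simp only [extMap_apply, Pi.add_apply, Pi.smul_apply, Pi.sub_apply, Pi.one_apply,
      smul_eq_mul]
    rw [Finset.sum_add_distrib, hsum, ← Finset.mul_sum]
    have : ∑ i : Fin n, (1 - γ ⟨ε, hε, le_refl ε⟩ i) = (n:ℝ) - ε := by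
      rw [Finset.sum_sub_distrib, hsum]
      simp
    rw [this, div_mul_cancel₀ _ hne]
    show min (t:ℝ) ε + (max (t:ℝ) ε - ε) = (t:ℝ)
    rcases le_total (t:ℝ) ε with h | h
    · rw [min_eq_left h, max_eq_right h]; ring
    · rw [min_eq_right h, max_eq_left h]; ring
  · -- value at n
    intro h
    have hnn : ε ≤ ((⟨(n:ℝ), h⟩ : Set.Icc (0:ℝ) (n:ℝ)) : ℝ) := hεn.le
    rw [extMap_of_ge hε hεn γ _ hnn]
    have : (((n:ℝ)) - ε) / ((n:ℝ) - ε) = 1 := div_self hne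
    rw [this]
    funext i
    simp

/-- Restriction map on continuous functions. -/
noncomputable def resMap (hεn : ε ≤ (n:ℝ)) (hε : 0 ≤ ε)
    (δ : C(Set.Icc (0:ℝ) (n:ℝ), Fin n → ℝ)) : C(Set.Icc (0:ℝ) ε, Fin n → ℝ) :=
  δ.comp ⟨fun t => ⟨t, t.2.1, le_trans t.2.2 hεn⟩, by
    exact Continuous.subtype_mk continuous_subtype_val _⟩

lemma resMap_apply (hεn : ε ≤ (n:ℝ)) (hε : 0 ≤ ε)
    (δ : C(Set.Icc (0:ℝ) (n:ℝ), Fin n → ℝ)) (t : Set.Icc (0:ℝ) ε) :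
    resMap hεn hε δ t = δ ⟨t, t.2.1, le_trans t.2.2 hεn⟩ := rfl

lemma resMap_natural (hεn : ε ≤ (n:ℝ)) (hε : 0 ≤ ε)
    (δ : C(Set.Icc (0:ℝ) (n:ℝ), Fin n → ℝ)) (hδ : IsNatural n n δ) :
    IsNatural n ε (resMap hεn hε δ) := by
  obtain ⟨hmono, hbox, h0, hsum⟩ := hδ
  refine ⟨?_, ?_, ?_, ?_⟩
  · intro i s t hst
    have hst' : (s : ℝ) ≤ (t : ℝ) := hst
    exact hmono i (Subtype.mk_le_mk.mpr hst')
  · intro t i; exact hbox _ i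
  · intro h; exact h0 _
  · intro t; exact hsum _

end Aux

theorem stmt5 (n : ℕ) (hn : 1 ≤ n) (ε : ℝ) (hε : 0 < ε) (hε1 : ε < 1) :
    ∃ E : C(NShort n ε, NFull n),
      (∀ (γ : NShort n ε) (t : Set.Icc (0:ℝ) (n:ℝ)),
        (∀ h : (t:ℝ) ≤ ε, (E γ).1 t = γ.1 ⟨t, t.2.1, h⟩) ∧
        (ε ≤ (t:ℝ) → (E γ).1 t =
          γ.1 ⟨ε, hε.le, le_refl ε⟩ +
            (((t:ℝ) - ε) / ((n:ℝ) - ε)) • ((1 : Fin n → ℝ) - γ.1 ⟨ε, hε.le, le_refl ε⟩))) ∧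
      ∃ r : C(NFull n, NShort n ε),
        (∀ (δ : NFull n) (t : Set.Icc (0:ℝ) ε),
          (r δ).1 t = δ.1 ⟨t, t.2.1,
            le_trans t.2.2 (le_trans hε1.le (by exact_mod_cast hn))⟩) ∧
        ∀ γ : NShort n ε, r (E γ) = γ := by
  have hn1 : (1:ℝ) ≤ (n:ℝ) := by exact_mod_cast hn
  have hεn : ε < (n:ℝ) := lt_of_lt_of_le hε1 hn1
  -- The extension map on underlying data
  set Efun : NShort n ε → NFull n := fun γ =>
    ⟨extMap hε.le hεn γ.1, extMap_natural hε.le hεn γ.1 γ.2⟩ with hEfun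
  have hElip : LipschitzWith 2 Efun := by
    apply LipschitzWith.of_dist_le_mul
    intro γ γ'
    show dist (extMap hε.le hεn γ.1) (extMap hε.le hεn γ'.1) ≤ 2 * dist γ.1 γ'.1
    rw [ContinuousMap.dist_le (by positivity)]
    intro t
    have h1 : dist (extMap hε.le hεn γ.1 t) (extMap hε.le hεn γ'.1 t) ≤
        dist (γ.1 (clampMap hε.le t)) (γ'.1 (clampMap hε.le t)) +
        dist (γ.1 ⟨ε, hε.le, le_refl ε⟩) (γ'.1 ⟨ε, hε.le, le_refl ε⟩) := by
      set c := (max (t : ℝ) ε - ε) / ((n:ℝ) - ε) with hc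
      have hc0 : 0 ≤ c := by
        apply div_nonneg
        · have := le_max_right (t : ℝ) ε; linarith
        · linarith
      have hc1 : c ≤ 1 := by
        rw [hc, div_le_one (by linarith)]
        have h2 : max (t : ℝ) ε ≤ (n:ℝ) := max_le t.2.2 hεn.le
        linarith
      simp only [extMap_apply, dist_eq_norm]
      have heq : (γ.1 (clampMap hε.le t) + c • ((1 : Fin n → ℝ) - γ.1 ⟨ε, hε.le, le_refl ε⟩)) -
          (γ'.1 (clampMap hε.le t) + c • ((1 : Fin n → ℝ) - γ'.1 ⟨ε, hε.le, le_refl ε⟩)) =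
          (γ.1 (clampMap hε.le t) - γ'.1 (clampMap hε.le t)) -
          c • (γ.1 ⟨ε, hε.le, le_refl ε⟩ - γ'.1 ⟨ε, hε.le, le_refl ε⟩) := by
        funext i
        simp only [Pi.add_apply, Pi.sub_apply, Pi.smul_apply, Pi.one_apply, smul_eq_mul]
        ring
      rw [heq]
      refine le_trans (norm_sub_le _ _) ?_
      gcongr
      rw [norm_smul]
      calc ‖c‖ * ‖γ.1 ⟨ε, hε.le, le_refl ε⟩ - γ'.1 ⟨ε, hε.le, le_refl ε⟩‖
          ≤ 1 * ‖γ.1 ⟨ε, hε.le, le_refl ε⟩ - γ'.1 ⟨ε, hε.le, le_refl ε⟩‖ := by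
            apply mul_le_mul_of_nonneg_right _ (norm_nonneg _)
            rw [Real.norm_eq_abs, abs_of_nonneg hc0]; exact hc1
        _ = ‖γ.1 ⟨ε, hε.le, le_refl ε⟩ - γ'.1 ⟨ε, hε.le, le_refl ε⟩‖ := one_mul _
    refine le_trans h1 ?_
    have h2 := ContinuousMap.dist_apply_le_dist (f := γ.1) (g := γ'.1) (clampMap hε.le t)
    have h3 := ContinuousMap.dist_apply_le_dist (f := γ.1) (g := γ'.1)
      (⟨ε, hε.le, le_refl ε⟩ : Set.Icc (0:ℝ) ε)
    linarith
  refine ⟨⟨Efun, hElip.continuous⟩, ?_, ?_⟩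
  · intro γ t
    constructor
    · intro h
      exact extMap_of_le hε.le hεn γ.1 t h
    · intro h
      exact extMap_of_ge hε.le hεn γ.1 t h
  · set rfun : NFull n → NShort n ε := fun δ =>
      ⟨resMap hεn.le hε.le δ.1, resMap_natural hεn.le hε.le δ.1 δ.2.1⟩ with hrfun
    have hrlip : LipschitzWith 1 rfun := by
      apply LipschitzWith.of_dist_le_mul
      intro δ δ'
      show dist (resMap hεn.le hε.le δ.1) (resMap hεn.le hε.le δ'.1) ≤ 1 * dist δ.1 δ'.1
      rw [one_mul, ContinuousMap.dist_le dist_nonneg]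
      intro t
      rw [resMap_apply, resMap_apply]
      exact ContinuousMap.dist_apply_le_dist _
    refine ⟨⟨rfun, hrlip.continuous⟩, ?_, ?_⟩
    · intro δ t
      rfl
    · intro γ
      apply Subtype.ext
      apply ContinuousMap.ext
      intro t
      show resMap hεn.le hε.le (extMap hε.le hεn γ.1) t = γ.1 t
      rw [resMap_apply]
      rw [extMap_of_le hε.le hεn γ.1 _ t.2.2]
end

section
/- Let n ≥ 2 and 0 < ε < 1. The subspace B = {γ ∈ N_n(ε) : ∃ i, γ_i ≡ 0} of short natural directed paths with image in the boundary of [0,1]^n is compact and a (closed) neighborhood retract in N_n(ε) — i.e., there is an open set U of N_n(ε) containing B and a retraction U → B. -/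
open Set Filter Topology

/-!
Natural paths are 1-Lipschitz, so `N_n(ε)` is compact by Arzelà–Ascoli, and `B` is a finite
union of closed sets.

For the retraction, lower every coordinate of `γ` by `m = minᵢ γᵢ(ε)`, clamping at `0`: the
coordinate realising the minimum becomes identically `0`, and nothing changes when some coordinate
already vanishes. The lowered path has ℓ¹-length `L ≤ ε`; reparametrizing it by arc length and
rescaling time and space by `ε / L` gives a natural path in `B`. This is defined on the open set
`{L > 0} ⊇ B`, and is continuous there because the arc-length reparametrization is 1-Lipschitz
in the length parameter and Lipschitz in the path.
-/

section MonotoneFamily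

variable {ι : Type*} [Fintype ι]

theorem sub_le_sum_sub_of_monotone {α : Type*} [Preorder α] {f : α → ι → ℝ}
    (hf : ∀ i, Monotone (f · i)) {s t : α} (hst : s ≤ t) (j : ι) :
    f t j - f s j ≤ ∑ i, f t i - ∑ i, f s i := by
  rw [← Finset.sum_sub_distrib]
  exact Finset.single_le_sum (f := fun i => f t i - f s i)
    (fun i _ => sub_nonneg.2 (hf i hst)) (Finset.mem_univ j)

theorem dist_le_dist_sum_of_monotone {α : Type*} [LinearOrder α] {f : α → ι → ℝ}
    (hf : ∀ i, Monotone (f · i)) (s t : α) :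
    dist (f s) (f t) ≤ dist (∑ i, f s i) (∑ i, f t i) := by
  wlog hst : s ≤ t generalizing s t
  · rw [dist_comm, dist_comm (∑ i, f s i)]
    exact this t s (le_of_not_ge hst)
  refine (dist_pi_le_iff dist_nonneg).2 fun j => ?_
  rw [dist_comm, Real.dist_eq, dist_comm, Real.dist_eq, abs_of_nonneg (sub_nonneg.2 (hf j hst))]
  exact (sub_le_sum_sub_of_monotone hf hst j).trans (le_abs_self _)

theorem lipschitzWith_one_of_monotone_of_sum_eq {s : Set ℝ} {f : s → ι → ℝ}
    (hf : ∀ i, Monotone (f · i)) (hsum : ∀ t, ∑ i, f t i = t) : LipschitzWith 1 f :=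
  LipschitzWith.of_dist_le_mul fun a b => by
    simpa [hsum, Subtype.dist_eq] using dist_le_dist_sum_of_monotone hf a b

end MonotoneFamily

noncomputable section NaturalReparam

variable {ι : Type*} [Fintype ι]

structure IsUnboundedDirectedPath (p : ℝ → ι → ℝ) : Prop where
  monotone : ∀ i, Monotone (p · i)
  continuous : Continuous p
  map_zero : p 0 = 0
  exists_le_sum : ∀ σ, ∃ t, 0 ≤ t ∧ σ ≤ ∑ i, p t i

def hitTime (p : ℝ → ι → ℝ) (σ : ℝ) : ℝ := sInf {t | 0 ≤ t ∧ σ ≤ ∑ i, p t i}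

/-- The reparametrization of `p` by its ℓ¹ arc length `∑ i, p t i`. Where the arc length is
constant so is `p`, so it does not matter which time of a level set `hitTime` picks. -/
def naturalReparam (p : ℝ → ι → ℝ) (σ : ℝ) : ι → ℝ := p (hitTime p σ)

variable {p q : ℝ → ι → ℝ}

theorem hitTime_le {σ t : ℝ} (ht : 0 ≤ t) (hσ : σ ≤ ∑ i, p t i) : hitTime p σ ≤ t :=
  csInf_le ⟨0, fun _ ht => ht.1⟩ ⟨ht, hσ⟩

namespace IsUnboundedDirectedPath

theorem monotone_sum (hp : IsUnboundedDirectedPath p) : Monotone fun t => ∑ i, p t i :=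
  fun _ _ hst => Finset.sum_le_sum fun i _ => hp.monotone i hst

theorem apply_nonneg (hp : IsUnboundedDirectedPath p) {t : ℝ} (ht : 0 ≤ t) (i : ι) :
    0 ≤ p t i := by
  simpa [hp.map_zero] using hp.monotone i ht

theorem hitTime_nonneg (hp : IsUnboundedDirectedPath p) (σ : ℝ) : 0 ≤ hitTime p σ :=
  le_csInf (hp.exists_le_sum σ) fun _ ht => ht.1

theorem monotone_hitTime (hp : IsUnboundedDirectedPath p) : Monotone (hitTime p) :=
  fun _ _ hσ => csInf_le_csInf ⟨0, fun _ ht => ht.1⟩ (hp.exists_le_sum _)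
    fun _ ht => ⟨ht.1, hσ.trans ht.2⟩

theorem sum_naturalReparam (hp : IsUnboundedDirectedPath p) (σ : ℝ) :
    ∑ i, naturalReparam p σ i = max σ 0 := by
  have hsum_cont : Continuous fun t => ∑ i, p t i :=
    continuous_finsetSum _ fun i _ => (continuous_apply i).comp hp.continuous
  have hmem := (isClosed_Ici.inter (isClosed_le continuous_const hsum_cont)).csInf_mem
    (hp.exists_le_sum σ) ⟨0, fun _ ht => ht.1⟩
  obtain ⟨T, hT, hσT⟩ := hp.exists_le_sum (max σ 0)
  obtain ⟨t₀, ht₀, hsum⟩ : ∃ t₀ ∈ Icc 0 T, ∑ i, p t₀ i = max σ 0 :=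
    intermediate_value_Icc hT hsum_cont.continuousOn ⟨by simp [hp.map_zero], hσT⟩
  refine le_antisymm ?_ (max_le hmem.2 (Finset.sum_nonneg fun i _ => hp.apply_nonneg hmem.1 i))
  exact hsum ▸ hp.monotone_sum (hitTime_le ht₀.1 (hsum ▸ le_max_left σ 0))

theorem naturalReparam_sum (hp : IsUnboundedDirectedPath p) {t : ℝ} (ht : 0 ≤ t) :
    naturalReparam p (∑ i, p t i) = p t := by
  have hle : hitTime p (∑ i, p t i) ≤ t := hitTime_le ht le_rfl
  have hsum : ∑ i, naturalReparam p (∑ i, p t i) i = ∑ i, p t i := by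
    rw [hp.sum_naturalReparam, max_eq_left (Finset.sum_nonneg fun i _ => hp.apply_nonneg ht i)]
  funext j
  have := sub_le_sum_sub_of_monotone hp.monotone hle j
  exact le_antisymm (hp.monotone j hle) (by unfold naturalReparam at hsum ⊢; linarith)

theorem naturalReparam_zero (hp : IsUnboundedDirectedPath p) : naturalReparam p 0 = 0 := by
  simpa [hp.map_zero] using hp.naturalReparam_sum le_rfl

theorem naturalReparam_nonneg (hp : IsUnboundedDirectedPath p) (σ : ℝ) (i : ι) :
    0 ≤ naturalReparam p σ i :=
  hp.apply_nonneg (hp.hitTime_nonneg σ) i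

theorem monotone_naturalReparam (hp : IsUnboundedDirectedPath p) (i : ι) :
    Monotone (naturalReparam p · i) :=
  (hp.monotone i).comp hp.monotone_hitTime

theorem lipschitzWith_naturalReparam (hp : IsUnboundedDirectedPath p) :
    LipschitzWith 1 (naturalReparam p) := by
  refine LipschitzWith.of_dist_le_mul fun σ τ => ?_
  rw [NNReal.coe_one, one_mul]
  refine (dist_le_dist_sum_of_monotone hp.monotone_naturalReparam σ τ).trans ?_
  rw [hp.sum_naturalReparam, hp.sum_naturalReparam]
  exact (LipschitzWith.id.max_const 0).dist_le_mul σ τ |>.trans_eq (one_mul _)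

theorem dist_naturalReparam_le (hp : IsUnboundedDirectedPath p) (hq : IsUnboundedDirectedPath q)
    {δ : ℝ} (hpq : ∀ t, 0 ≤ t → dist (p t) (q t) ≤ δ) (σ : ℝ) :
    dist (naturalReparam p σ) (naturalReparam q σ) ≤ (Fintype.card ι + 1) * δ := by
  set t := hitTime p σ
  have ht : 0 ≤ t := hp.hitTime_nonneg σ
  have hsum : dist (∑ i, p t i) (∑ i, q t i) ≤ Fintype.card ι * δ := by
    simpa using dist_sum_sum_le_of_le Finset.univ fun i _ =>
      (dist_le_pi_dist _ _ i).trans (hpq t ht)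
  have hq_t : dist (naturalReparam q σ) (q t) ≤ Fintype.card ι * δ := by
    calc dist (naturalReparam q σ) (q t)
        = dist (naturalReparam q σ) (naturalReparam q (∑ i, q t i)) := by
          rw [hq.naturalReparam_sum ht]
      _ ≤ dist (max σ 0) (∑ i, q t i) := by
          simpa [hq.sum_naturalReparam,
            max_eq_left (Finset.sum_nonneg fun i _ => hq.apply_nonneg ht i)]
            using dist_le_dist_sum_of_monotone hq.monotone_naturalReparam σ (∑ i, q t i)
      _ ≤ Fintype.card ι * δ := by rw [← hp.sum_naturalReparam σ]; exact hsum
  calc dist (naturalReparam p σ) (naturalReparam q σ)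
      ≤ dist (p t) (q t) + dist (q t) (naturalReparam q σ) := dist_triangle _ _ _
    _ ≤ δ + Fintype.card ι * δ := add_le_add (hpq t ht) (dist_comm (q t) _ ▸ hq_t)
    _ = (Fintype.card ι + 1) * δ := by ring

end IsUnboundedDirectedPath

end NaturalReparam

theorem IsNatural.lipschitzWith_one {n : ℕ} {ε : ℝ} {γ : C(Icc (0:ℝ) ε, Fin n → ℝ)}
    (hγ : IsNatural n ε γ) : LipschitzWith 1 γ :=
  lipschitzWith_one_of_monotone_of_sum_eq hγ.1 hγ.2.2.2

theorem isCompact_setOf_isNatural (n : ℕ) (ε : ℝ) :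
    IsCompact {γ : C(Icc (0:ℝ) ε, Fin n → ℝ) | IsNatural n ε γ} := by
  refine ArzelaAscoli.isCompact_of_equicontinuous _ ?_
    (LipschitzWith.uniformEquicontinuous _ 1 fun γ => γ.2.lipschitzWith_one).equicontinuous
  have himage : ContinuousMap.toFun '' {γ | IsNatural n ε γ} =
      {f | (∀ i, Monotone fun t => f t i) ∧ (∀ t i, f t i ∈ Icc (0:ℝ) 1) ∧
        (∀ h : (0:ℝ) ∈ Icc (0:ℝ) ε, f ⟨0, h⟩ = 0) ∧
        ∀ t : Icc (0:ℝ) ε, ∑ i, f t i = (t : ℝ)} := by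
    ext f
    refine ⟨?_, fun hf =>
      ⟨⟨f, (lipschitzWith_one_of_monotone_of_sum_eq hf.1 hf.2.2.2).continuous⟩, hf, rfl⟩⟩
    rintro ⟨γ, hγ, rfl⟩
    exact hγ
  rw [himage]
  refine (isCompact_univ_pi fun _ => isCompact_univ_pi fun _ => isCompact_Icc).of_isClosed_subset
    ?_ fun f hf t _ i _ => hf.2.1 t i
  simp only [Monotone, ofPred_and, ofPred_forall]
  refine .inter ?_ (.inter ?_ (.inter ?_ ?_)) <;> repeat' refine isClosed_iInter fun _ => ?_
  · exact isClosed_le (by fun_prop) (by fun_prop)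
  · exact isClosed_Icc.preimage (by fun_prop)
  · exact isClosed_eq (by fun_prop) continuous_const
  · exact isClosed_eq (by fun_prop) continuous_const

namespace NShort

variable {n : ℕ} {ε : ℝ}

instance : CompactSpace (NShort n ε) :=
  isCompact_iff_compactSpace.1 (isCompact_setOf_isNatural n ε)

def HasVanishingCoord (f : C(Icc (0:ℝ) ε, Fin n → ℝ)) : Prop := ∃ i, ∀ t, f t i = 0

theorem isClosed_setOf_hasVanishingCoord :
    IsClosed {γ : NShort n ε | HasVanishingCoord γ.1} := by
  -- `NShort` is a type synonym, so `fun_prop` does not see it as a subtype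
  have hval : Continuous fun γ : NShort n ε => γ.1 := continuous_subtype_val
  simp only [HasVanishingCoord, ofPred_exists, ofPred_forall]
  exact isClosed_iUnion_of_finite fun i => isClosed_iInter fun t => isClosed_eq
    (by fun_prop) continuous_const

noncomputable section Lowered

variable (hε : 0 ≤ ε)

def extend (γ : NShort n ε) : ℝ → Fin n → ℝ := IccExtend hε γ.1

def minEnd (γ : NShort n ε) : ℝ := ⨅ i, γ.extend hε ε i

/-- The ramp `max (t - ε) 0` makes the path unbounded without changing it on `[0, ε]`. -/
def lowered (γ : NShort n ε) (t : ℝ) (i : Fin n) : ℝ :=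
  max (γ.extend hε t i - γ.minEnd hε) 0 + max (t - ε) 0

def loweredLength (γ : NShort n ε) : ℝ := ∑ i, γ.lowered hε ε i

variable (γ γ' : NShort n ε)

theorem extend_of_mem {t : ℝ} (ht : t ∈ Icc 0 ε) : γ.extend hε t = γ.1 ⟨t, ht⟩ :=
  IccExtend_of_mem hε _ ht

theorem monotone_extend (i : Fin n) : Monotone (γ.extend hε · i) :=
  (γ.2.1 i).comp (monotone_projIcc hε)

theorem continuous_extend : Continuous (γ.extend hε) := γ.1.continuous.Icc_extend'

theorem extend_zero : γ.extend hε 0 = 0 := by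
  rw [extend, IccExtend_left]
  exact γ.2.2.2.1 _

theorem extend_nonneg (t : ℝ) (i : Fin n) : 0 ≤ γ.extend hε t i := (γ.2.2.1 _ i).1

theorem extend_le_extend_right (t : ℝ) (i : Fin n) :
    γ.extend hε t i ≤ γ.extend hε ε i := by
  rw [extend, IccExtend_right]
  exact γ.2.1 i (projIcc 0 ε hε t).2.2

theorem sum_extend {t : ℝ} (ht : t ∈ Icc 0 ε) : ∑ i, γ.extend hε t i = t := by
  rw [γ.extend_of_mem hε ht]
  exact γ.2.2.2.2 _

theorem abs_extend_sub_le (t : ℝ) (i : Fin n) :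
    |γ.extend hε t i - γ'.extend hε t i| ≤ dist γ γ' := by
  rw [← Real.dist_eq]
  exact (dist_le_pi_dist _ _ i).trans (ContinuousMap.dist_apply_le_dist _)

theorem minEnd_nonneg : 0 ≤ γ.minEnd hε := Real.iInf_nonneg fun i => γ.extend_nonneg hε ε i

theorem minEnd_le (i : Fin n) : γ.minEnd hε ≤ γ.extend hε ε i :=
  ciInf_le (Finite.bddBelow_range _) i

theorem exists_extend_eq_minEnd [NeZero n] : ∃ i, γ.extend hε ε i = γ.minEnd hε :=
  exists_eq_ciInf_of_finite

theorem minEnd_eq_zero {i : Fin n} (hi : ∀ t, γ.1 t i = 0) : γ.minEnd hε = 0 :=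
  le_antisymm ((γ.minEnd_le hε i).trans_eq (hi _)) (γ.minEnd_nonneg hε)

theorem abs_minEnd_sub_le [NeZero n] : |γ.minEnd hε - γ'.minEnd hε| ≤ dist γ γ' := by
  obtain ⟨i, hi⟩ := γ.exists_extend_eq_minEnd hε
  obtain ⟨i', hi'⟩ := γ'.exists_extend_eq_minEnd hε
  have h := abs_le.1 (γ.abs_extend_sub_le hε γ' ε i)
  have h' := abs_le.1 (γ.abs_extend_sub_le hε γ' ε i')
  refine abs_le.2 ⟨?_, ?_⟩
  · linarith [γ'.minEnd_le hε i]
  · linarith [γ.minEnd_le hε i']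

theorem lowered_of_le {t : ℝ} (ht : t ≤ ε) (i : Fin n) :
    γ.lowered hε t i = max (γ.extend hε t i - γ.minEnd hε) 0 := by
  simp [lowered, ht]

theorem lowered_of_hasVanishingCoord (hγ : HasVanishingCoord γ.1) {t : ℝ}
    (ht : t ∈ Icc 0 ε) :
    γ.lowered hε t = γ.extend hε t := by
  obtain ⟨i₀, hi₀⟩ := hγ
  funext i
  rw [γ.lowered_of_le hε ht.2, γ.minEnd_eq_zero hε hi₀, sub_zero,
    max_eq_left (γ.extend_nonneg hε t i)]

theorem lowered_eq_zero_of_extend_eq_minEnd {i : Fin n} (hi : γ.extend hε ε i = γ.minEnd hε)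
    {t : ℝ} (ht : t ≤ ε) : γ.lowered hε t i = 0 := by
  rw [γ.lowered_of_le hε ht, max_eq_right]
  linarith [γ.extend_le_extend_right hε t i]

theorem dist_lowered_le [NeZero n] (t : ℝ) :
    dist (γ.lowered hε t) (γ'.lowered hε t) ≤ 2 * dist γ γ' := by
  refine (dist_pi_le_iff (by positivity)).2 fun i => ?_
  rw [Real.dist_eq]
  simp only [lowered, add_sub_add_right_eq_sub]
  refine (abs_max_sub_max_le_abs _ _ 0).trans ?_
  rw [sub_sub_sub_comm]
  linarith [abs_sub (γ.extend hε t i - γ'.extend hε t i) (γ.minEnd hε - γ'.minEnd hε),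
    γ.abs_extend_sub_le hε γ' t i, γ.abs_minEnd_sub_le hε γ']

theorem isUnboundedDirectedPath_lowered [NeZero n] :
    IsUnboundedDirectedPath (γ.lowered hε) where
  monotone i _ _ hst :=
    add_le_add (max_le_max (sub_le_sub_right (γ.monotone_extend hε i hst) _) le_rfl)
      (max_le_max (sub_le_sub_right hst _) le_rfl)
  continuous := continuous_pi fun i => by
    have := γ.continuous_extend hε
    unfold lowered; fun_prop
  map_zero := by
    funext i
    simp [lowered, extend_zero, γ.minEnd_nonneg hε, hε]
  exists_le_sum σ := by
    refine ⟨ε + max σ 0, by positivity, ?_⟩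
    have hn : (1 : ℝ) ≤ n := Nat.one_le_cast.2 NeZero.one_le
    calc σ ≤ max σ 0 := le_max_left σ 0
      _ ≤ n * max σ 0 := le_mul_of_one_le_left (le_max_right σ 0) hn
      _ = ∑ _i : Fin n, max (ε + max σ 0 - ε) 0 := by simp
      _ ≤ ∑ i, γ.lowered hε (ε + max σ 0) i :=
        Finset.sum_le_sum fun i _ => le_add_of_nonneg_left (le_max_right _ _)

theorem loweredLength_nonneg [NeZero n] : 0 ≤ γ.loweredLength hε :=
  Finset.sum_nonneg fun i _ => (γ.isUnboundedDirectedPath_lowered hε).apply_nonneg hε i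

theorem loweredLength_of_hasVanishingCoord (hγ : HasVanishingCoord γ.1) :
    γ.loweredLength hε = ε := by
  rw [loweredLength, γ.lowered_of_hasVanishingCoord hε hγ (right_mem_Icc.2 hε),
    γ.sum_extend hε (right_mem_Icc.2 hε)]

theorem lipschitzWith_lowered [NeZero n] (t : ℝ) :
    LipschitzWith 2 fun γ : NShort n ε => γ.lowered hε t :=
  LipschitzWith.of_dist_le_mul fun γ γ' => by simpa using γ.dist_lowered_le hε γ' t

theorem continuous_loweredLength [NeZero n] :
    Continuous fun γ : NShort n ε => γ.loweredLength hε :=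
  continuous_finsetSum _ fun i _ =>
    (continuous_apply i).comp (lipschitzWith_lowered hε ε).continuous

theorem continuous_naturalReparam_lowered [NeZero n] :
    Continuous fun x : ℝ × NShort n ε => naturalReparam (x.2.lowered hε) x.1 := by
  refine continuous_prod_of_continuous_lipschitzWith _ 1 (fun σ => ?_)
    fun γ => (γ.isUnboundedDirectedPath_lowered hε).lipschitzWith_naturalReparam
  refine (LipschitzWith.of_dist_le_mul (K := (n + 1) * 2) fun γ γ' => ?_).continuous
  have := (γ.isUnboundedDirectedPath_lowered hε).dist_naturalReparam_le
    (γ'.isUnboundedDirectedPath_lowered hε) (fun t _ => γ.dist_lowered_le hε γ' t) σ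
  simpa [mul_assoc] using this

def retraction [NeZero n] (γ : NShort n ε) : C(Icc (0:ℝ) ε, Fin n → ℝ) where
  toFun s :=
    (ε / γ.loweredLength hε) • naturalReparam (γ.lowered hε) (s * γ.loweredLength hε / ε)
  continuous_toFun := by
    have := (γ.isUnboundedDirectedPath_lowered hε).lipschitzWith_naturalReparam.continuous
    fun_prop

theorem retraction_apply [NeZero n] (s : Icc (0:ℝ) ε) (i : Fin n) :
    γ.retraction hε s i =
      ε / γ.loweredLength hε *
        naturalReparam (γ.lowered hε) (s * γ.loweredLength hε / ε) i :=
  rfl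

theorem hasVanishingCoord_retraction [NeZero n] : HasVanishingCoord (γ.retraction hε) := by
  obtain ⟨i, hi⟩ := γ.exists_extend_eq_minEnd hε
  refine ⟨i, fun s => ?_⟩
  have hL := γ.loweredLength_nonneg hε
  have hσ : s * γ.loweredLength hε / ε ≤ ∑ j, γ.lowered hε ε j :=
    div_le_of_le_mul₀ hε hL (by rw [mul_comm]; exact mul_le_mul_of_nonneg_left s.2.2 hL)
  rw [retraction_apply, naturalReparam,
    γ.lowered_eq_zero_of_extend_eq_minEnd hε hi (hitTime_le hε hσ), mul_zero]

end Lowered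

section Retraction

variable (hε : 0 < ε) (γ : NShort n ε) [NeZero n]

theorem sum_retraction (hL : 0 < γ.loweredLength hε.le) (s : Icc (0:ℝ) ε) :
    ∑ i, γ.retraction hε.le s i = s := by
  simp only [retraction_apply, ← Finset.mul_sum,
    (γ.isUnboundedDirectedPath_lowered hε.le).sum_naturalReparam]
  rw [max_eq_left (by have := s.2.1; positivity)]
  field_simp

theorem isNatural_retraction (hε1 : ε ≤ 1) (hL : 0 < γ.loweredLength hε.le) :
    IsNatural n ε (γ.retraction hε.le) := by
  have hp := γ.isUnboundedDirectedPath_lowered hε.le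
  have hnonneg : ∀ s i, 0 ≤ γ.retraction hε.le s i := fun s i => by
    rw [retraction_apply]
    exact mul_nonneg (by positivity) (hp.naturalReparam_nonneg _ i)
  refine ⟨fun i s t hst => ?_, fun s i => ⟨hnonneg s i, ?_⟩, fun _ => ?_,
    γ.sum_retraction hε hL⟩
  · simp only [retraction_apply]
    gcongr
    exact hp.monotone_naturalReparam i (by gcongr)
  · calc γ.retraction hε.le s i ≤ ∑ j, γ.retraction hε.le s j :=
          Finset.single_le_sum (fun j _ => hnonneg s j) (Finset.mem_univ i)
      _ = s := γ.sum_retraction hε hL s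
      _ ≤ 1 := s.2.2.trans hε1
  · ext i
    simp [retraction_apply, hp.naturalReparam_zero]

theorem retraction_eq_self (hγ : HasVanishingCoord γ.1) : γ.retraction hε.le = γ.1 := by
  ext s i
  have hs : ∑ j, γ.lowered hε.le s j = s := by
    rw [γ.lowered_of_hasVanishingCoord hε.le hγ s.2, γ.sum_extend hε.le s.2]
  rw [retraction_apply, γ.loweredLength_of_hasVanishingCoord hε.le hγ, div_self hε.ne', one_mul,
    mul_div_cancel_right₀ _ hε.ne', ← hs,
    (γ.isUnboundedDirectedPath_lowered hε.le).naturalReparam_sum s.2.1,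
    γ.lowered_of_hasVanishingCoord hε.le hγ s.2, γ.extend_of_mem hε.le s.2]

theorem continuousOn_retraction :
    ContinuousOn (fun γ : NShort n ε => γ.retraction hε.le)
      {γ | 0 < γ.loweredLength hε.le} := by
  refine ContinuousMap.continuousOn_of_continuousOn_uncurry _ ?_
  have hL := continuous_loweredLength (n := n) hε.le
  have hG := continuous_naturalReparam_lowered (n := n) hε.le
  have hσ : Continuous fun x : NShort n ε × Icc (0:ℝ) ε =>
      ((x.2 : ℝ) * x.1.loweredLength hε.le / ε, x.1) := by fun_prop
  exact (continuousOn_const.div (hL.comp continuous_fst).continuousOn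
    fun x hx => hx.1.ne').smul (hG.comp hσ).continuousOn

end Retraction

end NShort

theorem stmt16 (n : ℕ) (hn : 2 ≤ n) (ε : ℝ) (hε : 0 < ε) (hε1 : ε < 1) :
    IsCompact {γ : NShort n ε | ∃ i, ∀ t, γ.1 t i = 0} ∧
    IsClosed {γ : NShort n ε | ∃ i, ∀ t, γ.1 t i = 0} ∧
    ∃ U : Set (NShort n ε), IsOpen U ∧
      ∃ hBU : {γ : NShort n ε | ∃ i, ∀ t, γ.1 t i = 0} ⊆ U,
        ∃ ρ : U → {γ : NShort n ε | ∃ i, ∀ t, γ.1 t i = 0},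
          Continuous ρ ∧
          ∀ (x : NShort n ε) (hx : x ∈ {γ : NShort n ε | ∃ i, ∀ t, γ.1 t i = 0}),
            ρ ⟨x, hBU hx⟩ = ⟨x, hx⟩ := by
  have : NeZero n := ⟨by omega⟩
  have hB : IsClosed {γ : NShort n ε | NShort.HasVanishingCoord γ.1} :=
    NShort.isClosed_setOf_hasVanishingCoord
  refine ⟨hB.isCompact, hB, {γ : NShort n ε | 0 < γ.loweredLength hε.le},
    isOpen_lt continuous_const (NShort.continuous_loweredLength hε.le),
    fun γ hγ => hε.trans_eq (γ.loweredLength_of_hasVanishingCoord hε.le hγ).symm,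
    fun γ => ⟨⟨γ.1.retraction hε.le, γ.1.isNatural_retraction hε hε1.le γ.2⟩,
      γ.1.hasVanishingCoord_retraction hε.le⟩,
    ?_, fun γ hγ => Subtype.ext (Subtype.ext (γ.retraction_eq_self hε hγ))⟩
  exact ((NShort.continuousOn_retraction hε).domRestrict.subtype_mk _).subtype_mk _
end
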